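/- Energy barrier lower bound from a distance-expansion property: Let S_X ≤ 𝔽₂ⁿ be a subgroup and H_Z an 𝔽₂-matrix (the Z parity checks). Suppose there exist constants c₁, c₂, δ₀ > 0 such that for all 0 ≤ δ < δ₀ and all y ∈ 𝔽₂ⁿ, if c₁δn ≤ |y|_{S_X} ≤ c₂n then |H_Z y| > δ·n_Z. Suppose the code distance satisfies d ≥ εn for ε > 0, with c₁δ'n < ⌊min(c₂n, d/2)⌋ for some constant δ' ∈ (0, δ₀). Then any sequence (y_i)_{i=1}^{l} of weight-1 vectors whose cumulative sums reach a nontrivial logical y ∈ L_X contains a partial sum y' with |H_Z y'| > δ'·n_Z. In particular the X energy barrier is at least δ'·n_Z = Ω(n). -/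
import Mathlib


open Finset

/-- Hamming weight of a vector over 𝔽₂. -/
def hwt {α : Type*} [Fintype α] (y : α → ZMod 2) : ℕ :=
  (univ.filter (fun i => y i = 1)).card

/-- The coset seminorm `|y|_{S} = min_{s ∈ S} |y ⊕ s|`. -/
noncomputable def cosetWt {n : ℕ} (S : Submodule (ZMod 2) (Fin n → ZMod 2))
    (y : Fin n → ZMod 2) : ℕ :=
  sInf {w : ℕ | ∃ s ∈ S, w = hwt (y + s)}

lemma hwt_add_le {α : Type*} [Fintype α] (u v : α → ZMod 2) :
    hwt (u + v) ≤ hwt u + hwt v := by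
  have h2 : ∀ x : ZMod 2, x = 0 ∨ x = 1 := by decide
  classical
  calc hwt (u + v) ≤ ((univ.filter (fun i => u i = 1)) ∪ (univ.filter (fun i => v i = 1))).card := by
        apply card_le_card
        intro i hi
        simp only [hwt, mem_filter, mem_union, mem_univ, true_and] at hi ⊢
        by_contra hc
        push_neg at hc
        rcases h2 (u i) with h | h
        · rcases h2 (v i) with h' | h'
          · simp [Pi.add_apply, h, h'] at hi
          · exact hc.2 h'
        · exact hc.1 h
    _ ≤ hwt u + hwt v := card_union_le _ _

lemma cosetWt_nonempty {n : ℕ} (S : Submodule (ZMod 2) (Fin n → ZMod 2))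
    (y : Fin n → ZMod 2) : {w : ℕ | ∃ s ∈ S, w = hwt (y + s)}.Nonempty :=
  ⟨hwt (y + 0), 0, S.zero_mem, rfl⟩

lemma cosetWt_le {n : ℕ} (S : Submodule (ZMod 2) (Fin n → ZMod 2))
    (y s : Fin n → ZMod 2) (hs : s ∈ S) : cosetWt S y ≤ hwt (y + s) :=
  Nat.sInf_le ⟨s, hs, rfl⟩

lemma cosetWt_zero {n : ℕ} (S : Submodule (ZMod 2) (Fin n → ZMod 2)) :
    cosetWt S 0 = 0 := by
  have h := cosetWt_le S 0 0 S.zero_mem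
  have : hwt ((0 : Fin n → ZMod 2) + 0) = 0 := by
    simp [hwt]
  omega

lemma cosetWt_add_le {n : ℕ} (S : Submodule (ZMod 2) (Fin n → ZMod 2))
    (a b : Fin n → ZMod 2) : cosetWt S (a + b) ≤ cosetWt S a + hwt b := by
  obtain ⟨s, hs, heq⟩ := Nat.sInf_mem (cosetWt_nonempty S a)
  calc cosetWt S (a + b) ≤ hwt (a + b + s) := cosetWt_le S (a + b) s hs
    _ = hwt ((a + s) + b) := by ring_nf
    _ ≤ hwt (a + s) + hwt b := hwt_add_le _ _
    _ = cosetWt S a + hwt b := by rw [← heq]; rfl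

/-- energy barrier lower bound from the distance-expansion property of the
Leverrier–Zémor codes.  Under the expansion hypothesis (`c₁δn ≤ |y|_{S_X} ≤ c₂n` implies
syndrome weight `> δ n_Z` for `0 ≤ δ < δ₀`), a linear distance `d ≥ εn`, and
`c₁δ'n < ⌊min(c₂n, d/2)⌋`, every sequence of single-qubit flips whose cumulative sum
reaches a nontrivial X logical has some partial sum with syndrome weight `> δ'·n_Z`. -/
theorem energy_barrier_lower_bound (n nZ d l : ℕ)
    (HZ : (Fin n → ZMod 2) →ₗ[ZMod 2] (Fin nZ → ZMod 2))
    (SX : Submodule (ZMod 2) (Fin n → ZMod 2))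
    (c1 c2 δ0 δ' ε : ℝ)
    (hc1 : 0 < c1) (hc2 : 0 < c2) (hδ0 : 0 < δ0) (hδ'pos : 0 < δ') (hδ'lt : δ' < δ0)
    (hexp : ∀ δ : ℝ, 0 ≤ δ → δ < δ0 → ∀ y : Fin n → ZMod 2,
      c1 * δ * n ≤ (cosetWt SX y : ℝ) → (cosetWt SX y : ℝ) ≤ c2 * n →
      δ * nZ < (hwt (HZ y) : ℝ))
    (hε : 0 < ε) (hdlin : ε * n ≤ (d : ℝ))
    (hfloor : c1 * δ' * n < (⌊min (c2 * n) ((d : ℝ) / 2)⌋ : ℝ))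
    (y : ℕ → (Fin n → ZMod 2)) (hy : ∀ i, hwt (y i) ≤ 1)
    (hlog : HZ (∑ i ∈ Finset.range l, y i) = 0 ∧
      d ≤ cosetWt SX (∑ i ∈ Finset.range l, y i)) (hdpos : 0 < d) :
    ∃ e ≤ l, δ' * nZ < (hwt (HZ (∑ i ∈ Finset.range e, y i)) : ℝ) := by
  classical
  set f : ℕ → ℕ := fun e => cosetWt SX (∑ i ∈ Finset.range e, y i) with hf
  -- the target intermediate value
  set m : ℕ := (⌊min (c2 * n) ((d : ℝ) / 2)⌋).toNat with hm
  have hfloor_nonneg : (0 : ℤ) ≤ ⌊min (c2 * n) ((d : ℝ) / 2)⌋ := by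
    have h0 : (0 : ℝ) ≤ c1 * δ' * n := by positivity
    have := lt_of_le_of_lt h0 hfloor
    exact_mod_cast this.le
  have hmcast : (m : ℝ) = (⌊min (c2 * n) ((d : ℝ) / 2)⌋ : ℝ) := by
    rw [hm]
    exact_mod_cast congrArg (fun z : ℤ => (z : ℝ)) (Int.toNat_of_nonneg hfloor_nonneg)
  -- m ≤ d
  have hm_le_d : m ≤ d := by
    have h1 : (m : ℝ) ≤ (d : ℝ) / 2 :=
      hmcast ▸ le_trans (Int.floor_le _) (min_le_right _ _)
    have h2 : (m : ℝ) ≤ (d : ℝ) := by linarith [Nat.cast_nonneg (α := ℝ) d]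
    exact_mod_cast h2
  -- f 0 = 0 and f is 1-Lipschitz upward
  have hf0 : f 0 = 0 := by simp [hf, cosetWt_zero]
  have hstep : ∀ e, f (e + 1) ≤ f e + 1 := by
    intro e
    have : f (e + 1) ≤ f e + hwt (y e) := by
      simpa [hf, Finset.sum_range_succ] using
        cosetWt_add_le SX (∑ i ∈ Finset.range e, y i) (y e)
    exact le_trans this (by have := hy e; omega)
  have hml : m ≤ f l := le_trans hm_le_d hlog.2
  -- find the first index reaching m
  have hex : ∃ k, m ≤ f k := ⟨l, hml⟩
  obtain ⟨e, hme, hmin⟩ : ∃ e, m ≤ f e ∧ ∀ k < e, ¬ m ≤ f k :=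
    ⟨Nat.find hex, Nat.find_spec hex, fun k hk => Nat.find_min hex hk⟩
  have hel : e ≤ l := by
    by_contra h
    exact hmin l (by omega) hml
  have hfe : f e = m := by
    cases e with
    | zero => omega
    | succ e' =>
      have h1 := hmin e' (Nat.lt_succ_self _)
      have h2 := hstep e'
      omega
  refine ⟨e, hel, ?_⟩
  have h1 : c1 * δ' * n ≤ (f e : ℝ) := by
    rw [hfe, hmcast]; exact hfloor.le
  have h2 : (f e : ℝ) ≤ c2 * n := by
    rw [hfe, hmcast]
    exact le_trans (Int.floor_le _) (min_le_left _ _)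
  exact hexp δ' hδ'pos.le hδ'lt _ h1 h2
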